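/- Let f : ℝ → b(ℝ) be the canonical dense one-parameter subgroup of the Bohr compactification of ℝ (the dual of id : ℝ_d → ℝ). For each n ∈ ℕ let R_n = {(r, n·f(r)) : r ∈ ℝ} ⊆ ℝ × b(ℝ). Identifying the dual of ℝ × b(ℝ) with ℝ × ℝ_d, the annihilator of R_n is R_n^⊥ = {(r, r/n) : r ∈ ℝ} ⊆ ℝ × ℝ_d, and the sequence (R_n^⊥)_{n∈ℕ} converges to the trivial subgroup {(0,0)} in the Chabauty topology on closed subgroups of ℝ × ℝ_d. -/

import Mathlib

open Pointwise Filter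

/-- `ℝ_d`: the real line with the discrete topology. -/
def Rd : Type := ℝ

noncomputable instance : AddCommGroup Rd := inferInstanceAs (AddCommGroup ℝ)
instance : TopologicalSpace Rd := ⊥
instance : DiscreteTopology Rd := ⟨rfl⟩
instance : IsTopologicalAddGroup Rd where
  continuous_add := continuous_of_discreteTopology
  continuous_neg := continuous_of_discreteTopology

/-- The identity map `ℝ_d → ℝ`. -/
def Rd.toReal : Rd → ℝ := fun t => t

/-- The identity map `ℝ → ℝ_d`. -/
def Rd.ofReal : ℝ → Rd := fun t => t

/-- The Bohr compactification `b(ℝ)` of `ℝ`, realized as the Pontryagin dual of `ℝ_d`. -/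
abbrev BohrR : Type _ := ContinuousAddMonoidHom Rd (AddCircle (1 : ℝ))

/-- The canonical one-parameter subgroup `f : ℝ → b(ℝ)` (the dual of `id : ℝ_d → ℝ`):
`f r` is the character `s ↦ ↑(r·s)` of `ℝ_d`. -/
noncomputable def bohrChar (r : ℝ) : BohrR :=
  { toAddMonoidHom := AddMonoidHom.mk' (fun s : Rd => ((r * Rd.toReal s : ℝ) : AddCircle (1 : ℝ)))
      (fun a b => by
        show ((r * (Rd.toReal a + Rd.toReal b) : ℝ) : AddCircle (1 : ℝ)) = _
        rw [mul_add]
        rfl)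
    continuous_toFun := continuous_of_discreteTopology }

/-- `R_n = {(r, n·f r) : r ∈ ℝ}`, the graph of `n·f` in `ℝ × b(ℝ)`. -/
noncomputable def Rn (n : ℕ) : Set (ℝ × BohrR) :=
  {z | ∃ r : ℝ, z = (r, n • bohrChar r)}

/-- The annihilator `R_n^⊥` inside the dual `ℝ × ℝ_d` of `ℝ × b(ℝ)`, the dual pairing
being `(a, t)(x, χ) = ↑(a·x) - χ(t)`. -/
noncomputable def RnPerp (n : ℕ) : Set (ℝ × Rd) :=
  {q | ∀ z ∈ Rn n, ((q.1 * z.1 : ℝ) : AddCircle (1 : ℝ)) - z.2 q.2 = 0}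

/-- Chabauty convergence of a sequence of subsets (closed subgroups) of a locally
compact additive group, via the standard neighborhood basis. -/
def ChabautyTendstoSet {G ι : Type*} [AddGroup G] [TopologicalSpace G]
    (H : ι → Set G) (l : Filter ι) (L : Set G) : Prop :=
  ∀ K : Set G, IsCompact K → ∀ W ∈ nhds (0 : G), ∀ᶠ i in l,
    H i ∩ K ⊆ W + L ∧ L ∩ K ⊆ W + H i

/-! The pairing of `(a, t) ∈ ℝ × ℝ_d` with the point `(r, n·f r)` of `R_n` is `↑((a - n t) r)`.
This vanishes for every `r` only if `a = n t`, since otherwise some `r` makes it `↑(1/2) ≠ 0`;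
so `R_n^⊥` is the line `a = n t`. A compact subset of `ℝ × ℝ_d` has bounded first coordinates and
only finitely many second coordinates `t`, so once `n |t|` exceeds the bound for each of these
`t ≠ 0`, the line `a = n t` meets it only at `0`. Subgroups that eventually meet every compact
set only at `0` converge to `{0}` in the Chabauty topology. -/

theorem AddCircle.eq_zero_of_forall_coe_mul_eq_zero {p c : ℝ} [Fact (0 < p)]
    (h : ∀ r : ℝ, ((c * r : ℝ) : AddCircle p) = 0) : c = 0 := by
  by_contra hc
  have half_period_order : addOrderOf ((p / (2 : ℕ) : ℝ) : AddCircle p) = 2 :=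
    AddCircle.addOrderOf_period_div two_pos
  rw [show p / (2 : ℕ) = c * (p / (2 * c)) by field_simp; norm_num, h] at half_period_order
  simp at half_period_order

theorem bohrChar_apply (r : ℝ) (t : Rd) :
    bohrChar r t = ((r * Rd.toReal t : ℝ) : AddCircle (1 : ℝ)) := rfl

theorem mem_RnPerp_iff (n : ℕ) (q : ℝ × Rd) : q ∈ RnPerp n ↔ q.1 = n * Rd.toReal q.2 := by
  have pairing (r : ℝ) : ((q.1 * r : ℝ) : AddCircle (1 : ℝ)) - (n • bohrChar r) q.2
      = (((q.1 - n * Rd.toReal q.2) * r : ℝ) : AddCircle (1 : ℝ)) := by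
    rw [ContinuousAddMonoidHom.nsmul_apply, bohrChar_apply, ← AddCircle.coe_nsmul,
      ← AddCircle.coe_sub, nsmul_eq_mul]
    ring_nf
  simp only [RnPerp, Rn, Set.mem_ofPred_eq, forall_exists_index]
  rw [forall_comm]
  simp only [forall_eq, pairing]
  exact ⟨fun h => sub_eq_zero.1 (AddCircle.eq_zero_of_forall_coe_mul_eq_zero h),
    fun h r => by simp [h]⟩

theorem chabautyTendstoSet_zero_of_eventually_inter_subset {G ι : Type*} [AddGroup G]
    [TopologicalSpace G] {H : ι → Set G} {l : Filter ι} (h0 : ∀ i, 0 ∈ H i)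
    (h : ∀ K, IsCompact K → ∀ᶠ i in l, H i ∩ K ⊆ {0}) : ChabautyTendstoSet H l {0} := by
  intro K hK W hW
  have zero_mem_add (S : Set G) (hS : (0 : G) ∈ S) : (0 : G) ∈ W + S := by
    simpa using Set.add_mem_add (mem_of_mem_nhds hW) hS
  filter_upwards [h K hK] with i hi
  refine ⟨fun x hx => ?_, fun x hx => ?_⟩
  · rw [hi hx]
    exact zero_mem_add {0} rfl
  · rw [hx.1]
    exact zero_mem_add (H i) (h0 i)

theorem eventually_RnPerp_inter_subset_zero {K : Set (ℝ × Rd)} (hK : IsCompact K) :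
    ∀ᶠ n in atTop, RnPerp n ∩ K ⊆ {0} := by
  obtain ⟨M, hM⟩ := (hK.image continuous_fst).isBounded.subset_closedBall 0
  have hS : (Prod.snd '' K).Finite := (hK.image continuous_snd).finite_of_discrete
  have large : ∀ t ∈ Prod.snd '' K, ∀ᶠ n : ℕ in atTop,
      Rd.toReal t ≠ 0 → M < n * |Rd.toReal t| := fun t _ => by
    rw [eventually_imp_distrib_left]
    exact fun ht =>
      (tendsto_natCast_atTop_atTop.atTop_mul_const (abs_pos.2 ht)).eventually_gt_atTop M
  filter_upwards [(eventually_all_finite hS).2 large] with n hn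
  rintro q ⟨hq, hqK⟩
  rw [mem_RnPerp_iff] at hq
  have ht : Rd.toReal q.2 = 0 := by
    by_contra ht
    have bounded : |q.1| ≤ M := by simpa using hM ⟨q, hqK, rfl⟩
    have := hn q.2 ⟨q, hqK, rfl⟩ ht
    rw [hq, abs_mul, Nat.abs_cast] at bounded
    linarith
  exact Prod.ext (by simp [hq, ht]) ht

theorem RnPerp_eq_graph {n : ℕ} (hn : 0 < n) :
    RnPerp n = {q : ℝ × Rd | ∃ r : ℝ, q = (r, Rd.ofReal (r / n))} := by
  have hn' : (n : ℝ) ≠ 0 := by positivity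
  ext ⟨a, t⟩
  rw [mem_RnPerp_iff]
  constructor
  · intro (h : a = n * Rd.toReal t)
    exact ⟨a, Prod.ext rfl (show Rd.toReal t = a / n by rw [h]; field_simp)⟩
  · rintro ⟨r, hq⟩
    rw [hq]
    show r = n * (r / n)
    field_simp

theorem zero_mem_RnPerp (n : ℕ) : (0 : ℝ × Rd) ∈ RnPerp n :=
  (mem_RnPerp_iff n 0).2 (mul_zero _).symm

/-- `R_n^⊥ = {(r, r/n) : r ∈ ℝ} ⊆ ℝ × ℝ_d`, and the sequence `(R_n^⊥)` converges to
the trivial subgroup `{(0,0)}` in the Chabauty topology on `ℝ × ℝ_d`. -/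
theorem RnPerp_eq_graph_and_tendsto_trivial :
    (∀ n : ℕ, 0 < n →
      RnPerp n = {q : ℝ × Rd | ∃ r : ℝ, q = (r, Rd.ofReal (r / n))}) ∧
    ChabautyTendstoSet RnPerp atTop ({0} : Set (ℝ × Rd)) :=
  ⟨fun _ => RnPerp_eq_graph, chabautyTendstoSet_zero_of_eventually_inter_subset zero_mem_RnPerp
    fun _ => eventually_RnPerp_inter_subset_zero⟩
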